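/- Let θ ∈ ℝ be irrational. Define bounded operators U and V on ℓ²(ℤ, ℂ) by (Uξ)(n) = ξ(n−1) and (Vξ)(n) = exp(2πinθ)ξ(n). If T is a bounded linear operator on ℓ²(ℤ, ℂ) satisfying TU = UT and TV = VT, then T is a scalar multiple of the identity. -/

import Mathlib

open Complex Real

/-!
Irrationality of θ makes the eigenvalues `exp (2πinθ)` of `V` pairwise distinct, so an operator
commuting with `V` preserves each eigenline `ℂ δₙ` and acts there by a scalar `cₙ`. Since `U` maps
`δₙ` to `δₙ₊₁`, commuting with `U` forces `cₙ₊₁ = cₙ`; thus `T` agrees with `c₀ • id` on the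
basis vectors `δₙ`, whose span is dense in `ℓ²(ℤ)`.
-/

theorem Irrational.injective_exp_two_pi_I_intCast_mul {θ : ℝ} (hθ : Irrational θ) :
    Function.Injective fun n : ℤ => exp (2 * π * I * n * θ) := by
  intro n k hnk
  obtain ⟨m, hm⟩ := Complex.exp_eq_exp_iff_exists_int.mp hnk
  have hcomplex : ((n - k : ℤ) : ℂ) * θ = m := by
    have h2πI : (2 * π * I : ℂ) ≠ 0 := by simp [Real.pi_ne_zero, I_ne_zero]
    apply mul_left_cancel₀ h2πI
    push_cast
    linear_combination hm
  by_contra hne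
  have hreal : ((n - k : ℤ) : ℝ) * θ = m := by exact_mod_cast hcomplex
  exact (hθ.intCast_mul (sub_ne_zero.mpr hne)).ne_int m hreal

namespace lp

open scoped ENNReal

variable {p : ℝ≥0∞} [Fact (1 ≤ p)]

section

variable {ι : Type*} [DecidableEq ι] {T : lp (fun _ : ι => ℂ) p →L[ℂ] lp (fun _ : ι => ℂ) p}

theorem apply_single_one_of_commute_mul {φ : ι → ℂ} (hφ : Function.Injective φ)
    (hT : ∀ ξ η : lp (fun _ : ι => ℂ) p, (∀ n, η n = φ n * ξ n) → ∀ n, T η n = φ n * T ξ n)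
    (k : ι) : T (lp.single p k 1) = T (lp.single p k 1) k • lp.single p k 1 := by
  ext n
  rcases eq_or_ne n k with rfl | hnk
  · simp
  have hmul : ∀ j, (φ k • lp.single (E := fun _ => ℂ) p k 1) j =
      φ j * lp.single (E := fun _ => ℂ) p k 1 j := by
    intro j
    rcases eq_or_ne j k with rfl | hjk
    · simp
    · simp [hjk]
  have h := hT _ _ hmul n
  rw [map_smul, lp.coeFn_smul, Pi.smul_apply, smul_eq_mul] at h
  have hzero : T (lp.single p k 1) n = 0 :=
    (mul_eq_mul_right_iff.mp h).resolve_left (hφ.ne hnk).symm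
  simp [hzero, hnk]

theorem eq_smul_of_apply_single_one (hp : p ≠ ⊤) {c : ℂ}
    (h : ∀ k, T (lp.single p k 1) = c • lp.single p k 1) (ξ : lp (fun _ : ι => ℂ) p) :
    T ξ = c • ξ := by
  suffices T = c • ContinuousLinearMap.id ℂ _ by simp [this]
  refine lp.ext_continuousLinearMap hp fun k => ContinuousLinearMap.ext_ring ?_
  simp [h]

end

theorem apply_single_one_self_of_commute_shift
    {T : lp (fun _ : ℤ => ℂ) p →L[ℂ] lp (fun _ : ℤ => ℂ) p}
    (hT : ∀ ξ η : lp (fun _ : ℤ => ℂ) p, (∀ n, η n = ξ (n - 1)) → ∀ n, T η n = T ξ (n - 1))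
    (k : ℤ) : T (lp.single p k 1) k = T (lp.single p 0 1) 0 := by
  have hperiodic : Function.Periodic (fun k : ℤ => T (lp.single p k 1) k) 1 := by
    intro k
    have hshift : ∀ n, lp.single (E := fun _ => ℂ) p (k + 1) 1 n =
        lp.single (E := fun _ => ℂ) p k 1 (n - 1) := by
      intro n
      simp only [lp.single_apply, Pi.single_apply, sub_eq_iff_eq_add]
    simpa using hT _ _ hshift (k + 1)
  simpa using hperiodic.int_mul_eq k

end lp

theorem commutant_of_torus_representation_is_scalar
    (θ : ℝ) (hθ : Irrational θ)
    (T : lp (fun _ : ℤ => ℂ) 2 →L[ℂ] lp (fun _ : ℤ => ℂ) 2)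
    (hTU : ∀ ξ η : lp (fun _ : ℤ => ℂ) 2, (∀ n : ℤ, η n = ξ (n - 1)) →
      ∀ n : ℤ, (T η) n = (T ξ) (n - 1))
    (hTV : ∀ ξ η : lp (fun _ : ℤ => ℂ) 2,
      (∀ n : ℤ, η n = Complex.exp (2 * π * I * (n : ℂ) * (θ : ℂ)) * ξ n) →
      ∀ n : ℤ, (T η) n = Complex.exp (2 * π * I * (n : ℂ) * (θ : ℂ)) * (T ξ) n) :
    ∃ c : ℂ, ∀ ξ : lp (fun _ : ℤ => ℂ) 2, T ξ = c • ξ := by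
  refine ⟨T (lp.single 2 0 1) 0, lp.eq_smul_of_apply_single_one ENNReal.ofNat_ne_top fun k => ?_⟩
  rw [lp.apply_single_one_of_commute_mul hθ.injective_exp_two_pi_I_intCast_mul hTV k,
    lp.apply_single_one_self_of_commute_shift hTU k]
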